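/- arXiv:1410.5177 — 2 statements merged into one kernel-verified Lean document; each statement's English description precedes it below -/
import Mathlib

section
/- Let N ≥ 2 and let {|u^m_i⟩}_{i=1}^d for m = 1,…,N be N orthonormal bases of ℂ^d, and let |ψ⟩ ∈ ℂ^d be a unit vector. Then for any choice of indices i_1,…,i_N, the product of outcome probabilities satisfies ∏_{m=1}^N |⟨u^m_{i_m}|ψ⟩|² ≤ ∏_{m=1}^N (1 + |⟨u^m_{i_m}|u^{m+1}_{i_{m+1}}⟩|)/2, where the superscript index is taken modulo N (i.e. u^{N+1} := u^1). -/
open scoped BigOperators ComplexOrder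

noncomputable section

/-- Standard inner product `⟨a|b⟩` on `ℂ^d` (conjugate-linear in the first argument). -/
def inn {d : ℕ} (a b : Fin d → ℂ) : ℂ := ∑ k, (starRingEnd ℂ) (a k) * b k

/-- The overlap `c(a,b) = |⟨a|b⟩|²`. -/
def ov {d : ℕ} (a b : Fin d → ℂ) : ℝ := ‖inn a b‖ ^ 2

/-- `u` lists the vectors of an orthonormal basis of `ℂ^d`. -/
def IsONB {d : ℕ} (u : Fin d → Fin d → ℂ) : Prop :=
  ∀ i j, inn (u i) (u j) = if i = j then 1 else 0

/-- Shannon entropy (base 2) of a probability vector; note `Real.logb 2 0 = 0`. -/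
def shannon {d : ℕ} (p : Fin d → ℝ) : ℝ := -∑ i, p i * Real.logb 2 (p i)

/-- Outcome probabilities `p_i = ⟨u_i|ρ|u_i⟩` of a projective measurement on the state `ρ`. -/
def probM {d : ℕ} (ρ : Matrix (Fin d) (Fin d) ℂ) (v : Fin d → Fin d → ℂ) (i : Fin d) : ℝ :=
  (dotProduct (star (v i)) (ρ.mulVec (v i))).re

open Classical in
/-- Von Neumann entropy (base 2): `S(ρ) = -∑ λ_k log₂ λ_k` over the eigenvalues of `ρ`. -/
def vNEnt {ι : Type} [Fintype ι] [DecidableEq ι] (A : Matrix ι ι ℂ) : ℝ :=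
  if h : A.IsHermitian then -∑ k, h.eigenvalues k * Real.logb 2 (h.eigenvalues k) else 0

open Classical in
/-- Matrix base-2 logarithm on the support, via the spectral decomposition
(eigenvalue `0` is sent to `0` since `Real.logb 2 0 = 0`). -/
def mlog2 {ι : Type} [Fintype ι] [DecidableEq ι] (A : Matrix ι ι ℂ) : Matrix ι ι ℂ :=
  if h : A.IsHermitian then
    (h.eigenvectorUnitary : Matrix ι ι ℂ) *
      Matrix.diagonal (fun k => (Real.logb 2 (h.eigenvalues k) : ℂ)) *
      star (h.eigenvectorUnitary : Matrix ι ι ℂ)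
  else 0

/-- Quantum relative entropy `S(ρ‖σ) = Tr(ρ log₂ ρ) - Tr(ρ log₂ σ)`. -/
def relEnt {ι : Type} [Fintype ι] [DecidableEq ι] (ρ σ : Matrix ι ι ℂ) : ℝ :=
  ((ρ * mlog2 ρ).trace - (ρ * mlog2 σ).trace).re

/-- The bound `b` of Theorem 2 of the paper, for `N = n + 2` measurements (indexed `0,…,n+1`):
`b = max_{i_N} { ∑_{i_2,…,i_{N-1}} max_{i_1}[c(u^1_{i_1},u^2_{i_2})]
  ∏_{m=2}^{N-1} c(u^m_{i_m},u^{m+1}_{i_{m+1}}) }`.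
Here `g : Fin n → Fin d` lists the middle indices `(i_2,…,i_{N-1})`, `jN = i_N`, and
`Fin.snoc g jN : Fin (n+1) → Fin d` is the chain `(i_2,…,i_N)`. -/
def bBound {d n : ℕ} (u : Fin (n + 2) → Fin d → Fin d → ℂ) : ℝ :=
  ⨆ jN : Fin d, ∑ g : Fin n → Fin d,
    (⨆ i1 : Fin d, ov (u 0 i1) (u 1 ((Fin.snoc g jN : Fin (n + 1) → Fin d) 0))) *
      ∏ k : Fin n, ov (u k.succ.castSucc ((Fin.snoc g jN : Fin (n + 1) → Fin d) k.castSucc))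
        (u k.succ.succ ((Fin.snoc g jN : Fin (n + 1) → Fin d) k.succ))

/-- Partial trace over system `A`: `(Tr_A X)_{j j'} = ∑_i X_{(i,j),(i,j')}`. -/
def trA {d dB : ℕ} (X : Matrix (Fin d × Fin dB) (Fin d × Fin dB) ℂ) :
    Matrix (Fin dB) (Fin dB) ℂ :=
  Matrix.of fun j j' => ∑ i, X (i, j) (i, j')

/-- The operator `|a⟩⟨a| ⊗ I` acting on `ℂ^d ⊗ ℂ^{dB}`. -/
def projA {d : ℕ} (dB : ℕ) (a : Fin d → ℂ) : Matrix (Fin d × Fin dB) (Fin d × Fin dB) ℂ :=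
  Matrix.kroneckerMap (· * ·) (Matrix.vecMulVec a (star a)) (1 : Matrix (Fin dB) (Fin dB) ℂ)

end

/-! For unit vectors `a, b, ψ`, pairing `ψ` with `w = ⟪a, ψ⟫ a + ⟪b, ψ⟫ b` gives
`s := |⟪a, ψ⟫|² + |⟪b, ψ⟫|² ≤ ‖w‖`, while expanding `‖w‖²` gives `‖w‖² ≤ s (1 + |⟪a, b⟫|)`.
Hence `s ≤ 1 + |⟪a, b⟫|`, and by AM–GM `|⟪a, ψ⟫|² |⟪b, ψ⟫|² ≤ ((1 + |⟪a, b⟫|) / 2)²`.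
Multiplying these bounds over the consecutive pairs `(m, m + 1)` of the cycle, each probability
occurs twice, so the square of the product of the probabilities is at most the square of the
product of the bounds `(1 + |⟪u^m, u^{m+1}⟫|) / 2`. -/

open scoped InnerProductSpace

section UnitVectors

variable {𝕜 E : Type*} [RCLike 𝕜] [NormedAddCommGroup E] [InnerProductSpace 𝕜 E]

theorem norm_inner_sq_add_norm_inner_sq_le {a b ψ : E} (ha : ‖a‖ = 1) (hb : ‖b‖ = 1)
    (hψ : ‖ψ‖ = 1) :
    ‖⟪a, ψ⟫_𝕜‖ ^ 2 + ‖⟪b, ψ⟫_𝕜‖ ^ 2 ≤ 1 + ‖⟪a, b⟫_𝕜‖ := by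
  set α := ⟪a, ψ⟫_𝕜
  set β := ⟪b, ψ⟫_𝕜
  set s := ‖α‖ ^ 2 + ‖β‖ ^ 2
  set w := α • a + β • b
  have hw_inner : ⟪w, ψ⟫_𝕜 = (s : 𝕜) := by
    simp only [w, s, inner_add_left, inner_smul_left, RCLike.conj_mul, α, β]
    push_cast; ring
  have hs_le : s ≤ ‖w‖ := by
    have : ‖⟪w, ψ⟫_𝕜‖ ≤ ‖w‖ * ‖ψ‖ := norm_inner_le_norm w ψ
    rwa [hw_inner, hψ, mul_one, RCLike.norm_ofReal, abs_of_nonneg (by positivity)] at this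
  have hcross : RCLike.re ⟪α • a, β • b⟫_𝕜 ≤ ‖α‖ * ‖β‖ * ‖⟪a, b⟫_𝕜‖ :=
    (RCLike.re_le_norm _).trans_eq <| by
      rw [inner_smul_left, inner_smul_right, norm_mul, norm_mul, RCLike.norm_conj, mul_assoc]
  have hw_sq : ‖w‖ ^ 2 ≤ s * (1 + ‖⟪a, b⟫_𝕜‖) := by
    have hαβ : 2 * (‖α‖ * ‖β‖) ≤ s := by rw [← mul_assoc]; exact two_mul_le_add_sq _ _
    rw [norm_add_sq (𝕜 := 𝕜), norm_smul, norm_smul, ha, hb]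
    nlinarith [norm_nonneg ⟪a, b⟫_𝕜]
  nlinarith [norm_nonneg w, norm_nonneg ⟪a, b⟫_𝕜]

theorem norm_inner_sq_mul_norm_inner_sq_le {a b ψ : E} (ha : ‖a‖ = 1) (hb : ‖b‖ = 1)
    (hψ : ‖ψ‖ = 1) :
    ‖⟪a, ψ⟫_𝕜‖ ^ 2 * ‖⟪b, ψ⟫_𝕜‖ ^ 2 ≤ ((1 + ‖⟪a, b⟫_𝕜‖) / 2) ^ 2 := by
  have hsum := norm_inner_sq_add_norm_inner_sq_le (𝕜 := 𝕜) ha hb hψ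
  have hamgm := four_mul_le_sq_add (‖⟪a, ψ⟫_𝕜‖ ^ 2) (‖⟪b, ψ⟫_𝕜‖ ^ 2)
  nlinarith [sq_nonneg (‖⟪a, ψ⟫_𝕜‖ ^ 2 + ‖⟪b, ψ⟫_𝕜‖ ^ 2)]

end UnitVectors

theorem Finset.prod_le_prod_of_mul_perm_le_sq {ι R : Type*} [Fintype ι] [CommSemiring R]
    [LinearOrder R] [IsStrictOrderedRing R] (σ : Equiv.Perm ι) {p q : ι → R}
    (hp : ∀ m, 0 ≤ p m) (hq : ∀ m, 0 ≤ q m) (h : ∀ m, p m * p (σ m) ≤ q m ^ 2) :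
    ∏ m, p m ≤ ∏ m, q m := by
  refine (pow_le_pow_iff_left₀ (prod_nonneg fun m _ => hp m) (prod_nonneg fun m _ => hq m)
    two_ne_zero).mp ?_
  calc (∏ m, p m) ^ 2 = ∏ m, p m * p (σ m) := by
        rw [prod_mul_distrib, Equiv.prod_comp σ p, sq]
    _ ≤ ∏ m, q m ^ 2 := prod_le_prod (fun m _ => mul_nonneg (hp m) (hp (σ m))) fun m _ => h m
    _ = (∏ m, q m) ^ 2 := prod_pow _ _ _

theorem inn_eq_inner {d : ℕ} (a b : Fin d → ℂ) :
    inn a b = ⟪WithLp.toLp 2 a, WithLp.toLp 2 b⟫_ℂ := by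
  simp [inn, PiLp.inner_apply, mul_comm]

theorem norm_toLp_eq_one_of_inn_self {d : ℕ} {a : Fin d → ℂ} (h : inn a a = 1) :
    ‖WithLp.toLp 2 a‖ = 1 := by
  rw [inn_eq_inner, inner_self_eq_norm_sq_to_K, ← RCLike.ofReal_pow, ← RCLike.ofReal_one,
    RCLike.ofReal_inj] at h
  exact (pow_eq_one_iff_of_nonneg (norm_nonneg _) two_ne_zero).mp h

theorem IsONB.norm_toLp_eq_one {d : ℕ} {u : Fin d → Fin d → ℂ} (hu : IsONB u) (j : Fin d) :
    ‖WithLp.toLp 2 (u j)‖ = 1 :=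
  norm_toLp_eq_one_of_inn_self <| (hu j j).trans (if_pos rfl)

/-- For `N = n + 2 ≥ 2` orthonormal bases of `ℂ^d` and a unit vector `ψ`,
the product of the outcome probabilities `|⟨u^m_{i_m}|ψ⟩|²` is bounded by
`∏_m (1 + |⟨u^m_{i_m}|u^{m+1}_{i_{m+1}}⟩|)/2`, indices mod `N` (`Fin (n+2)` addition). -/
theorem prod_prob_le_prod_overlap {d n : ℕ} (u : Fin (n + 2) → Fin d → Fin d → ℂ)
    (hu : ∀ m, IsONB (u m)) (ψ : Fin d → ℂ) (hψ : inn ψ ψ = 1) (i : Fin (n + 2) → Fin d) :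
    ∏ m : Fin (n + 2), ‖inn (u m (i m)) ψ‖ ^ 2 ≤
      ∏ m : Fin (n + 2), (1 + ‖inn (u m (i m)) (u (m + 1) (i (m + 1)))‖) / 2 := by
  refine Finset.prod_le_prod_of_mul_perm_le_sq (Equiv.addRight 1) (fun m => by positivity)
    (fun m => by positivity) fun m => ?_
  simp only [Equiv.coe_addRight, inn_eq_inner]
  exact norm_inner_sq_mul_norm_inner_sq_le ((hu m).norm_toLp_eq_one _)
    ((hu (m + 1)).norm_toLp_eq_one _) (norm_toLp_eq_one_of_inn_self hψ)
end

section
/- Let ρ_AB be a positive definite density matrix on ℂ^d ⊗ ℂ^{d_B} and let V = {|v_j⟩} be a projective measurement on system A given by an orthonormal basis of ℂ^d. Then S(ρ_AB ‖ ∑_j (|v_j⟩⟨v_j| ⊗ I) ρ_AB (|v_j⟩⟨v_j| ⊗ I)) = H(V|B) − S(A|B). -/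
open scoped BigOperators ComplexOrder

/-! The pinched state `σ = ∑ⱼ Pⱼ ρ Pⱼ` commutes with every projector `Pⱼ = |vⱼ⟩⟨vⱼ| ⊗ I`, hence so
does `log₂ σ`, which is a continuous function of `σ`. Since the `Pⱼ` are idempotents summing to `1`,
`Tr(σ X) = Tr(ρ X)` for every `X` commuting with all `Pⱼ`; taking `X = log₂ σ` gives
`Tr(ρ log₂ σ) = -S(σ)`, so `S(ρ‖σ) = S(σ) - S(ρ)` and the entropies of `ρ_B` cancel. -/
open Matrix
open scoped Kronecker

section MatrixLog

variable {ι : Type} [Fintype ι] [DecidableEq ι]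

theorem mlog2_eq_cfc (A : Matrix ι ι ℂ) : mlog2 A = cfc (Real.logb 2) A := by
  by_cases hA : A.IsHermitian
  · rw [hA.cfc_eq, mlog2, dif_pos hA, IsHermitian.cfc, Unitary.conjStarAlgAut_apply]
    rfl
  · rw [mlog2, dif_neg hA]
    exact (cfc_apply_of_not_predicate A hA).symm

theorem Commute.mlog2_left {A X : Matrix ι ι ℂ} (h : Commute A X) : Commute (mlog2 A) X :=
  mlog2_eq_cfc A ▸ h.cfc_real _

theorem Matrix.IsHermitian.trace_cfc {A : Matrix ι ι ℂ} (hA : A.IsHermitian) (f : ℝ → ℝ) :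
    (cfc f A).trace = ∑ k, (f (hA.eigenvalues k) : ℂ) := by
  have hU : star (hA.eigenvectorUnitary : Matrix ι ι ℂ) * hA.eigenvectorUnitary = 1 :=
    Unitary.star_mul_self_of_mem hA.eigenvectorUnitary.2
  rw [hA.cfc_eq, IsHermitian.cfc, Unitary.conjStarAlgAut_apply, trace_mul_cycle, hU, one_mul,
    trace_diagonal]
  rfl

theorem Matrix.IsHermitian.re_trace_mul_mlog2_self {A : Matrix ι ι ℂ} (hA : A.IsHermitian) :
    (A * mlog2 A).trace.re = -vNEnt A := by
  have hspec : (spectrum ℝ A).Finite := by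
    rw [hA.spectrum_real_eq_range_eigenvalues]; exact Set.finite_range _
  nth_rewrite 1 [mlog2_eq_cfc, ← cfc_id ℝ A]
  rw [← cfc_mul id (Real.logb 2) A continuousOn_id (hspec.continuousOn _), hA.trace_cfc, vNEnt,
    dif_pos hA, neg_neg, ← Complex.ofReal_sum, Complex.ofReal_re]
  rfl

end MatrixLog

section Pinching

variable {R κ : Type*} [Fintype κ]

theorem commute_sum_mul_mul_self [Ring R] [DecidableEq κ] {P : κ → R}
    (hP : ∀ i j, P i * P j = if i = j then P i else 0) (ρ : R) (i : κ) :
    Commute (∑ j, P j * ρ * P j) (P i) := by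
  have hright : (∑ j, P j * ρ * P j) * P i = P i * ρ * P i := by
    simp only [Finset.sum_mul, mul_assoc, hP, mul_ite, mul_zero, Finset.sum_ite_eq',
      Finset.mem_univ, if_true]
  have hleft : P i * (∑ j, P j * ρ * P j) = P i * ρ * P i := by
    simp only [Finset.mul_sum, ← mul_assoc, hP, ite_mul, zero_mul, Finset.sum_ite_eq,
      Finset.mem_univ, if_true]
  exact hright.trans hleft.symm

theorem IsSelfAdjoint.sum_mul_mul_self [Ring R] [StarRing R] {ρ : R} (hρ : IsSelfAdjoint ρ)
    {P : κ → R} (hP : ∀ j, IsSelfAdjoint (P j)) : IsSelfAdjoint (∑ j, P j * ρ * P j) :=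
  isSelfAdjoint_sum _ fun j _ => hρ.conjugate_self (hP j)

theorem Matrix.trace_sum_mul_mul_self_mul {n : Type*} [Fintype n] [DecidableEq n] [CommRing R]
    {P : κ → Matrix n n R} (hP : ∀ j, P j * P j = P j) (hsum : ∑ j, P j = 1)
    (ρ : Matrix n n R) {X : Matrix n n R} (hX : ∀ j, Commute X (P j)) :
    ((∑ j, P j * ρ * P j) * X).trace = (ρ * X).trace := by
  have hterm : ∀ j, (P j * ρ * P j * X).trace = (ρ * (X * P j)).trace := fun j =>
    calc (P j * ρ * P j * X).trace = (P j * (ρ * X * P j)).trace := by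
          rw [mul_assoc _ (P j), ← (hX j).eq]; simp only [mul_assoc]
      _ = (ρ * X * P j * P j).trace := trace_mul_comm _ _
      _ = (ρ * (X * P j)).trace := by rw [mul_assoc _ (P j), hP, mul_assoc]
  rw [Finset.sum_mul, trace_sum, Finset.sum_congr rfl fun j _ => hterm j, ← trace_sum,
    ← Finset.mul_sum, ← Finset.mul_sum, hsum, mul_one]

end Pinching

section Projections

variable {d : ℕ}

theorem IsONB.sum_vecMulVec_star {v : Fin d → Fin d → ℂ} (hv : IsONB v) :
    ∑ j, vecMulVec (v j) (star (v j)) = 1 := by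
  set W : Matrix (Fin d) (Fin d) ℂ := Matrix.of fun k j => v j k
  have hW : Wᴴ * W = 1 := by
    ext i j
    simpa [W, mul_apply, one_apply, inn] using hv i j
  calc ∑ j, vecMulVec (v j) (star (v j)) = W * Wᴴ := by
        ext k k'
        simp [W, Matrix.sum_apply, mul_apply, vecMulVec_apply]
    _ = 1 := mul_eq_one_comm.mp hW

theorem IsONB.projA_mul_projA {v : Fin d → Fin d → ℂ} (hv : IsONB v) (dB : ℕ) (i j : Fin d) :
    projA dB (v i) * projA dB (v j) = if i = j then projA dB (v i) else 0 := by
  have hdot : star (v i) ⬝ᵥ v j = if i = j then 1 else 0 := hv i j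
  rw [projA, projA, ← mul_kronecker_mul, vecMulVec_mul_vecMulVec, hdot, mul_one]
  split_ifs with h
  · rw [one_smul, h]
  · rw [zero_smul, vecMulVec_zero, zero_kronecker]

theorem isHermitian_projA (dB : ℕ) (a : Fin d → ℂ) : (projA dB a).IsHermitian := by
  rw [IsHermitian, projA, conjTranspose_kronecker, conjTranspose_vecMulVec, star_star,
    conjTranspose_one]

theorem IsONB.sum_projA {v : Fin d → Fin d → ℂ} (hv : IsONB v) (dB : ℕ) :
    ∑ j, projA dB (v j) = 1 := by
  have hsum : ∑ j, projA dB (v j) = (∑ j, vecMulVec (v j) (star (v j))) ⊗ₖ 1 := by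
    ext ⟨i, b⟩ ⟨i', b'⟩
    simp [projA, Matrix.sum_apply, Finset.sum_mul]
  rw [hsum, hv.sum_vecMulVec_star, one_kronecker_one]

end Projections

theorem relEnt_memory_identity_general {d dB : ℕ}
    (ρAB : Matrix (Fin d × Fin dB) (Fin d × Fin dB) ℂ)
    (hρ : ρAB.PosDef)
    (v : Fin d → Fin d → ℂ) (hv : IsONB v) :
    relEnt ρAB (∑ j, projA dB (v j) * ρAB * projA dB (v j)) =
      (vNEnt (∑ j, projA dB (v j) * ρAB * projA dB (v j)) - vNEnt (trA ρAB)) -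
        (vNEnt ρAB - vNEnt (trA ρAB)) := by
  set σ := ∑ j, projA dB (v j) * ρAB * projA dB (v j)
  have hσ : σ.IsHermitian :=
    IsSelfAdjoint.sum_mul_mul_self hρ.isHermitian fun j => isHermitian_projA dB (v j)
  have hlog : ∀ j, Commute (mlog2 σ) (projA dB (v j)) := fun j =>
    (commute_sum_mul_mul_self (hv.projA_mul_projA dB) ρAB j).mlog2_left
  have hpinch : (σ * mlog2 σ).trace = (ρAB * mlog2 σ).trace :=
    trace_sum_mul_mul_self_mul (fun j => by simpa using hv.projA_mul_projA dB j j)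
      (hv.sum_projA dB) ρAB hlog
  rw [relEnt, ← hpinch, Complex.sub_re, hρ.isHermitian.re_trace_mul_mlog2_self,
    hσ.re_trace_mul_mlog2_self]
  ring

/-- for a positive definite bipartite density matrix `ρ_AB` and a projective
measurement `V` on `A`,
`S(ρ_AB ‖ ∑_j (|v_j⟩⟨v_j|⊗I) ρ_AB (|v_j⟩⟨v_j|⊗I)) = H(V|B) - S(A|B)`. -/
theorem relEnt_memory_identity {d dB : ℕ}
    (ρAB : Matrix (Fin d × Fin dB) (Fin d × Fin dB) ℂ)
    (hρ : ρAB.PosDef) (hρ1 : ρAB.trace = 1)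
    (v : Fin d → Fin d → ℂ) (hv : IsONB v) :
    relEnt ρAB (∑ j, projA dB (v j) * ρAB * projA dB (v j)) =
      (vNEnt (∑ j, projA dB (v j) * ρAB * projA dB (v j)) - vNEnt (trA ρAB)) -
        (vNEnt ρAB - vNEnt (trA ρAB)) :=
  relEnt_memory_identity_general ρAB hρ v hv
end
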